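/- arXiv:2011.07838 — 2 statements merged into one kernel-verified Lean document; each statement's English description precedes it below -/
import Mathlib

section
/- Let S be a set of substitutions (nonerasing endomorphisms) of A* for a finite alphabet A. Every S-adic word belongs to the stable set of S. Moreover, if (σ_n)_{n≥1} is a directive sequence of an S-adic word w (i.e., w = lim_{n→∞} σ_1σ_2⋯σ_n(a_n) for some sequence of letters (a_n)), then (σ_n)_{n≥1} is also a directive sequence of w as an element of the stable set (there exist infinite words (w_n)_{n≥0} with w_0 = w and w_n = σ_{n+1}(w_{n+1}) for all n). -/
universe u
variable {A : Type u}

/-- Apply a substitution (given by images of letters) to a finite word. -/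
def applyList (f : A → List A) (u : List A) : List A := u.flatMap f

/-- Starting position of the image of the `n`-th letter of `v` inside `f(v)`. -/
def blockStart (f : A → List A) (v : ℕ → A) : ℕ → ℕ
  | 0 => 0
  | n + 1 => blockStart f v n + (f (v n)).length

/-- `ApplyEq f v u` means `u = f(v)` for right-infinite words. -/
def ApplyEq (f : A → List A) (v u : ℕ → A) : Prop :=
  ∀ (n i : ℕ) (h : i < (f (v n)).length),
    u (blockStart f v n + i) = (f (v n))[i]

/-- `u` occurs as a factor of `w` at position `k`. -/
def FactorAt (w : ℕ → A) (u : List A) (k : ℕ) : Prop :=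
  ∀ (i : ℕ) (h : i < u.length), u[i] = w (k + i)

def Factor (w : ℕ → A) (u : List A) : Prop := ∃ k, FactorAt w u k

/-- `u` is a prefix of the infinite word `w`. -/
def PrefixOf (u : List A) (w : ℕ → A) : Prop :=
  ∀ (i : ℕ) (h : i < u.length), u[i] = w i

/-- Membership in the stable set of a set `S` of substitutions. -/
def InStable (S : Set (A → List A)) (w : ℕ → A) : Prop :=
  ∃ (σ : ℕ → A → List A) (ws : ℕ → ℕ → A),
    (∀ n, σ n ∈ S) ∧ ws 0 = w ∧ ∀ n, ApplyEq (σ n) (ws (n + 1)) (ws n)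

/-- Composition `σ_1 ∘ ⋯ ∘ σ_n` of the first `n` substitutions of `s` (0-indexed). -/
def compSeq (s : ℕ → A → List A) : ℕ → A → List A
  | 0 => fun a => [a]
  | n + 1 => fun a => applyList (compSeq s n) (s n a)

/-- `w` is S-adic with directive sequence `σ`. -/
def SAdicWith (σ : ℕ → A → List A) (w : ℕ → A) : Prop :=
  ∃ a : ℕ → A, (∀ n, PrefixOf (compSeq σ n (a n)) w) ∧
    ∀ N : ℕ, ∃ n, N ≤ (compSeq σ n (a n)).length

section Aux
variable {A : Type u}

lemma applyList_applyList (f g : A → List A) (u : List A) :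
    applyList f (applyList g u) = applyList (fun a => applyList f (g a)) u := by
  simp [applyList, List.flatMap_assoc]

lemma applyList_singleton (u : List A) : applyList (fun a => [a]) u = u := by
  simp [applyList]

lemma compSeq_succ_left (s : ℕ → A → List A) (t : ℕ) (b : A) :
    compSeq s (t + 1) b = applyList (s 0) (compSeq (fun i => s (i + 1)) t b) := by
  induction t generalizing b with
  | zero => simp [compSeq, applyList]
  | succ t ih =>
    show applyList (compSeq s (t + 1)) (s (t + 1) b) = _
    have : compSeq s (t + 1) = fun b => applyList (s 0) (compSeq (fun i => s (i + 1)) t b) :=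
      funext fun b => ih b
    rw [this, ← applyList_applyList]
    rfl

lemma blockStart_succ_shift (f : A → List A) (v : ℕ → A) (k : ℕ) :
    blockStart f v (k + 1) = (f (v 0)).length + blockStart f (fun j => v (j + 1)) k := by
  induction k with
  | zero => simp [blockStart]
  | succ k ih =>
    show blockStart f v (k + 1) + (f (v (k + 1))).length = _
    rw [ih, blockStart]
    omega

lemma lemB (f : A → List A) : ∀ (k : ℕ) (u : List A) (v : ℕ → A) (hk : k < u.length),
    (∀ t (ht : t ≤ k), u[t]'(lt_of_le_of_lt ht hk) = v t) →
    ∀ (i : ℕ) (hi : i < (f (v k)).length),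
    ∃ hp : blockStart f v k + i < (applyList f u).length,
      (applyList f u)[blockStart f v k + i]'hp = (f (v k))[i]'hi := by
  intro k
  induction k with
  | zero =>
    intro u v hk hagree i hi
    match u, hk with
    | b :: t, _ =>
      have hb : b = v 0 := hagree 0 le_rfl
      have happ : applyList f (b :: t) = f b ++ applyList f t := by
        simp [applyList]
      subst hb
      have hi' : (0 : ℕ) + i < (f (v 0)).length := by omega
      have hp : blockStart f v 0 + i < (applyList f (v 0 :: t)).length := by
        rw [happ, blockStart]
        simp only [List.length_append]
        omega
      refine ⟨hp, ?_⟩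
      have : blockStart f v 0 + i = i := by simp [blockStart]
      simp only [happ, blockStart, Nat.zero_add] at hp ⊢
      rw [List.getElem_append_left hi]
  | succ k ih =>
    intro u v hk hagree i hi
    match u with
    | b :: t =>
      have hb : b = v 0 := hagree 0 (Nat.zero_le _)
      have hk' : k < t.length := by simpa using hk
      have hagree' : ∀ t' (ht' : t' ≤ k), t[t']'(lt_of_le_of_lt ht' hk') = (fun j => v (j + 1)) t' := by
        intro t' ht'
        have := hagree (t' + 1) (by omega)
        simpa using this
      obtain ⟨hp', heq'⟩ := ih t (fun j => v (j + 1)) hk' hagree' i hi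
      have happ : applyList f (b :: t) = f b ++ applyList f t := by simp [applyList]
      have hbs := blockStart_succ_shift f v k
      have hp : blockStart f v (k + 1) + i < (applyList f (b :: t)).length := by
        rw [happ, hbs, hb]
        simp only [List.length_append]
        omega
      refine ⟨hp, ?_⟩
      simp only [happ] at hp ⊢
      have hidx : blockStart f v (k + 1) + i = (f b).length + (blockStart f (fun j => v (j + 1)) k + i) := by
        rw [hbs, hb]; omega
      rw [List.getElem_append_right (by omega)]
      have : blockStart f v (k + 1) + i - (f b).length = blockStart f (fun j => v (j + 1)) k + i := by omega
      simp only [this]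
      exact heq'

lemma length_applyList_le (f : A → List A) (K : ℕ) (hK : ∀ a, (f a).length ≤ K) :
    ∀ u : List A, (applyList f u).length ≤ u.length * K := by
  intro u
  induction u with
  | nil => simp [applyList]
  | cons b t ih =>
    have : applyList f (b :: t) = f b ++ applyList f t := by simp [applyList]
    rw [this]
    simp only [List.length_append, List.length_cons]
    have := hK b
    calc (f b).length + (applyList f t).length ≤ K + t.length * K := by omega
    _ = (t.length + 1) * K := by ring

lemma exists_ultra_val [Finite A] [Nonempty A] (U : Ultrafilter ℕ) (g : ℕ → A) :
    ∃ b, {j | g j = b} ∈ (U : Filter ℕ) := by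
  by_contra hcon
  push_neg at hcon
  have h1 : ∀ b : A, {j | g j = b}ᶜ ∈ (U : Filter ℕ) := by
    intro b
    exact (Ultrafilter.compl_mem_iff_notMem).mpr (hcon b)
  have h2 : (⋂ b : A, {j | g j = b}ᶜ) ∈ (U : Filter ℕ) := Filter.iInter_mem.mpr h1
  obtain ⟨j, hj⟩ := Filter.nonempty_of_mem h2
  simp only [Set.mem_iInter, Set.mem_compl_iff, Set.mem_setOf_eq] at hj
  exact hj (g j) rfl

lemma ultra_val_unique (U : Ultrafilter ℕ) {g : ℕ → A} {b b' : A}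
    (h : {j | g j = b} ∈ (U : Filter ℕ)) (h' : {j | g j = b'} ∈ (U : Filter ℕ)) : b = b' := by
  obtain ⟨j, hj, hj'⟩ := Filter.nonempty_of_mem (Filter.inter_mem h h')
  simp only [Set.mem_setOf_eq] at hj hj'
  rw [← hj, hj']

end Aux

/-- every S-adic word belongs to the stable set of `S`, with the same
directive sequence. -/
theorem stmt9 {A : Type u} [Fintype A] (S : Set (A → List A))
    (hS : ∀ f ∈ S, ∀ a, f a ≠ []) (σ : ℕ → A → List A) (hσ : ∀ n, σ n ∈ S)
    (w : ℕ → A) (h : SAdicWith σ w) :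
    ∃ ws : ℕ → ℕ → A, ws 0 = w ∧ ∀ n, ApplyEq (σ n) (ws (n + 1)) (ws n) := by
  classical
  obtain ⟨a, hpre, hlen⟩ := h
  haveI : Nonempty A := ⟨w 0⟩
  choose m hm using hlen
  -- the finite desubstituted words
  set W : ℕ → ℕ → List A := fun n m' => compSeq (fun k => σ (n + k)) (m' - n) (a m') with hWdef
  have hW0 : ∀ m', W 0 m' = compSeq σ m' (a m') := by
    intro m'
    have : (fun k => σ (0 + k)) = σ := funext fun k => by rw [Nat.zero_add]
    simp [hWdef, this]
  have hWstep : ∀ n m', n < m' → W n m' = applyList (σ n) (W (n + 1) m') := by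
    intro n m' hnm
    have h1 : m' - n = (m' - (n + 1)) + 1 := by omega
    have h2 : (fun i => (fun k => σ (n + k)) (i + 1)) = fun k => σ ((n + 1) + k) :=
      funext fun i => by ring_nf
    calc W n m' = compSeq (fun k => σ (n + k)) ((m' - (n + 1)) + 1) (a m') := by rw [hWdef]; simp only [h1]
    _ = applyList ((fun k => σ (n + k)) 0) (compSeq (fun i => (fun k => σ (n + k)) (i + 1)) (m' - (n + 1)) (a m')) := compSeq_succ_left _ _ _
    _ = applyList (σ n) (W (n + 1) m') := by rw [h2]; rfl
  have hWdecomp : ∀ q m', q ≤ m' → W 0 m' = applyList (compSeq σ q) (W q m') := by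
    intro q
    induction q with
    | zero => intro m' _; rw [show compSeq σ 0 = fun a => [a] from rfl, applyList_singleton]
    | succ q ih =>
      intro m' hq
      rw [ih m' (by omega), hWstep q m' (by omega), applyList_applyList]
      rfl
  -- ultrafilter machinery
  set U : Ultrafilter ℕ := Filter.hyperfilter ℕ with hU
  set F : ℕ → ℕ → ℕ → A := fun j n i =>
    if h : n ≤ m j ∧ i < (W n (m j)).length then (W n (m j))[i]'h.2 else w i with hF
  set ws : ℕ → ℕ → A := fun n i => Classical.choose (exists_ultra_val U (fun j => F j n i)) with hws
  have hwsU : ∀ n i, {j | F j n i = ws n i} ∈ (U : Filter ℕ) := fun n i =>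
    Classical.choose_spec (exists_ultra_val U (fun j => F j n i))
  have hws_eq : ∀ n i (b : A), {j | F j n i = b} ∈ (U : Filter ℕ) → ws n i = b := by
    intro n i b hb
    exact ultra_val_unique U (hwsU n i) hb
  refine ⟨ws, ?_, ?_⟩
  · -- ws 0 = w
    funext i
    apply hws_eq
    have hFw : ∀ j, F j 0 i = w i := by
      intro j
      by_cases hc : (0:ℕ) ≤ m j ∧ i < (W 0 (m j)).length
      · have h1 : F j 0 i = (W 0 (m j))[i]'hc.2 := dif_pos hc
        have h2 := hpre (m j) i (by rw [← hW0 (m j)]; exact hc.2)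
        rw [h1, ← h2]
        simp only [hW0]
      · exact dif_neg hc
    simp only [hFw]
    exact Filter.univ_mem' fun j => trivial
  · -- the desubstitution relations
    intro n
    intro k i hi
    set q := n + 1 with hq
    set p := blockStart (σ n) (ws q) k + i with hp
    -- thresholds
    set Bq := (Finset.range q).sup (fun m' => (compSeq σ m' (a m')).length) with hBq
    set Kq := max 1 (Finset.univ.sup (fun b : A => (compSeq σ q b).length)) with hKq
    have hKb : ∀ b : A, (compSeq σ q b).length ≤ Kq := by
      intro b
      rw [hKq]
      exact le_trans (Finset.le_sup (f := fun b : A => (compSeq σ q b).length) (Finset.mem_univ b)) (le_max_right _ _)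
    set T := max (Bq + 1) (k * Kq + 1) with hT
    have hbig : ∀ j, T ≤ j → q ≤ m j ∧ k < (W q (m j)).length := by
      intro j hj
      have hLj : j ≤ (compSeq σ (m j) (a (m j))).length := hm j
      have hq1 : q ≤ m j := by
        by_contra hcon
        push_neg at hcon
        have : (compSeq σ (m j) (a (m j))).length ≤ Bq := by
          rw [hBq]
          exact Finset.le_sup (f := fun m' => (compSeq σ m' (a m')).length) (Finset.mem_range.mpr hcon)
        omega
      refine ⟨hq1, ?_⟩
      have hle : (compSeq σ (m j) (a (m j))).length ≤ (W q (m j)).length * Kq := by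
        rw [← hW0 (m j), hWdecomp q (m j) hq1]
        exact length_applyList_le _ _ hKb _
      by_contra hcon
      push_neg at hcon
      have : (W q (m j)).length * Kq ≤ k * Kq := Nat.mul_le_mul_right _ hcon
      omega
    -- the good set of indices
    have hEmem : ({j | F j n p = ws n p} ∩ ((⋂ t ∈ Finset.range (k + 1), {j | F j q t = ws q t}) ∩ {j | T ≤ j})) ∈ (U : Filter ℕ) := by
      apply Filter.inter_mem (hwsU n p)
      apply Filter.inter_mem
      · apply (Filter.biInter_mem (Finset.range (k + 1)).finite_toSet).mpr
        intro t _
        exact hwsU q t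
      · apply Filter.mem_hyperfilter_of_finite_compl
        apply Set.Finite.subset (Set.finite_Iio T)
        intro j hj
        simpa [Set.mem_Iio] using hj
    obtain ⟨j, hj1, hj2, hj3⟩ := Filter.nonempty_of_mem hEmem
    simp only [Set.mem_setOf_eq, Set.mem_iInter, Finset.mem_coe, Finset.mem_range] at hj1 hj2 hj3
    obtain ⟨hq1, hk1⟩ := hbig j hj3
    -- agreement at level q
    have hagree : ∀ t (ht : t ≤ k), (W q (m j))[t]'(lt_of_le_of_lt ht hk1) = ws q t := by
      intro t ht
      have h1 := hj2 t (by omega)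
      rw [← h1, hF]
      beta_reduce
      rw [dif_pos (⟨hq1, lt_of_le_of_lt ht hk1⟩ : q ≤ m j ∧ t < (W q (m j)).length)]
    obtain ⟨hplt, heq⟩ := lemB (σ n) k (W q (m j)) (ws q) hk1 hagree i hi
    have hWn : W n (m j) = applyList (σ n) (W q (m j)) := hWstep n (m j) (by omega)
    have hplt' : p < (W n (m j)).length := by rw [hWn]; exact hplt
    have h2 : F j n p = (W n (m j))[p]'hplt' := by
      rw [hF]
      beta_reduce
      rw [dif_pos (⟨by omega, hplt'⟩ : n ≤ m j ∧ p < (W n (m j)).length)]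
    have h3 : (W n (m j))[p]'hplt' = (σ n (ws q k))[i]'hi := by
      simp only [hWn] at hplt' ⊢
      exact heq
    rw [← hj1, h2, h3]
end

section
/- There exists no finite set S of substitutions on {a,b} such that the set of Sturmian words equals the stable set of S. -/
universe u
variable {A : Type u}

-- Binary alphabet: letter `a` is `false`, letter `b` is `true`.
def La : Bool → List Bool | false => [false] | true => [false, true]
def Lb : Bool → List Bool | false => [true, false] | true => [true]
def Ra : Bool → List Bool | false => [false] | true => [true, false]
def Rb : Bool → List Bool | false => [false, true] | true => [true]

/-- An infinite word is balanced. -/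
def IsBalanced (w : ℕ → Bool) : Prop :=
  ∀ (c : Bool) (u v : List Bool), Factor w u → Factor w v → u.length = v.length →
    |(u.count c : ℤ) - (v.count c : ℤ)| ≤ 1

/-- `w` is ultimately periodic. -/
def UltPeriodic (w : ℕ → Bool) : Prop :=
  ∃ p N : ℕ, 0 < p ∧ ∀ n, N ≤ n → w (n + p) = w n

/-- Sturmian = aperiodic balanced binary infinite word. -/
def Sturmian (w : ℕ → Bool) : Prop := IsBalanced w ∧ ¬ UltPeriodic w

/-!
The stable set of a finite set `S` of substitutions over a finite alphabet is closed in the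
product topology: along an ultrafilter, the directive sequences (with values in the finite set
`S`) and the desubstituted words converge letter by letter, and each constraint of
`w = σ(w')` involves only finitely many letters. The set of Sturmian words is not closed: the
mechanical words of irrational slope `α → 0` are Sturmian and converge to the periodic word
`aaa⋯`.
-/

lemma factorAt_cons_iff {w : ℕ → A} {x : A} {u : List A} {p : ℕ} :
    FactorAt w (x :: u) p ↔ x = w p ∧ FactorAt w u (p + 1) := by
  constructor
  · intro h
    refine ⟨h 0 (by simp), fun i hi => ?_⟩
    have := h (i + 1) (by simpa using hi)
    rwa [List.getElem_cons_succ, ← Nat.add_assoc, Nat.add_right_comm] at this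
  · rintro ⟨hx, hu⟩ (_ | i) hi
    · exact hx
    · rw [List.getElem_cons_succ, hu i (by simpa using hi), Nat.add_right_comm, Nat.add_assoc]

lemma blockStart_congr {f : A → List A} {v v' : ℕ → A} {n : ℕ}
    (h : ∀ j < n, v j = v' j) : blockStart f v n = blockStart f v' n := by
  induction n with
  | zero => rfl
  | succ n ih =>
    simp only [blockStart]
    rw [ih fun j hj => h j (by omega), h n (by omega)]

lemma ApplyEq.of_forall_exists {f : A → List A} {v u : ℕ → A}
    (h : ∀ n p, ∃ v' u', ApplyEq f v' u' ∧ (∀ j ≤ n, v' j = v j) ∧ u' p = u p) :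
    ApplyEq f v u := by
  intro n i hi
  obtain ⟨v', u', happ, hv, hu⟩ := h n (blockStart f v n + i)
  have hstart : blockStart f v' n = blockStart f v n :=
    blockStart_congr fun j hj => hv j hj.le
  have hletter : v' n = v n := hv n le_rfl
  rw [← hu, ← hstart]
  simpa only [hletter] using happ n i (by rwa [hletter])

lemma Ultrafilter.exists_eventually_eq {X β : Type*} [Finite β] (U : Ultrafilter X)
    (g : X → β) : ∃ b, ∀ᶠ x in U, g x = b := by
  obtain ⟨b, hb⟩ := (U.map g).eq_pure_of_finite
  exact ⟨b, show {b} ∈ U.map g by rw [hb]; exact Ultrafilter.mem_pure.2 rfl⟩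

theorem isClosed_setOf_inStable [TopologicalSpace A] [DiscreteTopology A] [Finite A]
    {S : Set (A → List A)} (hS : S.Finite) : IsClosed {w : ℕ → A | InStable S w} := by
  rw [isClosed_iff_ultrafilter]
  intro w U hUw hU
  have : Finite S := hS
  let V : Ultrafilter {w : ℕ → A | InStable S w} :=
    U.comap Subtype.val_injective (by rwa [Subtype.range_coe])
  choose σ ws hσS hws0 happ using fun v : {w : ℕ → A | InStable S w} => v.2
  choose σ₀ hσ₀ using fun n => V.exists_eventually_eq fun v => (⟨σ v n, hσS v n⟩ : S)
  choose ws₀ hws₀ using fun n m => V.exists_eventually_eq fun v => ws v n m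
  have hVw : ∀ m, ∀ᶠ v : {w : ℕ → A | InStable S w} in V, (v : ℕ → A) m = w m := by
    intro m
    have hm : ∀ᶠ x in (U : Filter (ℕ → A)), x m = w m := by
      have := tendsto_pi_nhds.1 hUw m
      rwa [nhds_discrete, Filter.tendsto_pure] at this
    rw [Ultrafilter.coe_comap]
    exact hm.comap _
  refine ⟨fun n => σ₀ n, ws₀, fun n => (σ₀ n).2, ?_, fun n => ?_⟩
  · funext m
    obtain ⟨v, hv, hvw⟩ := ((hws₀ 0 m).and (hVw m)).exists
    rw [← hv, hws0 v, hvw]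
  · refine ApplyEq.of_forall_exists fun N p => ?_
    have hprefix : ∀ᶠ v in V, ∀ j ≤ N, ws v (n + 1) j = ws₀ (n + 1) j :=
      (Filter.eventually_all_finite (Set.finite_Iic N)).2 fun j _ => hws₀ (n + 1) j
    obtain ⟨v, hvσ, hvpre, hvp⟩ := ((hσ₀ n).and (hprefix.and (hws₀ n p))).exists
    refine ⟨ws v (n + 1), ws v n, ?_, hvpre, hvp⟩
    simpa only [← hvσ] using happ v n

lemma abs_floor_sub_floor_sub_lt (a b : ℝ) :
    |((⌊a⌋ - ⌊b⌋ : ℤ) : ℝ) - (a - b)| < 1 := by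
  rw [abs_sub_lt_iff]
  push_cast
  constructor <;> linarith [Int.floor_le a, Int.lt_floor_add_one a, Int.floor_le b,
    Int.lt_floor_add_one b]

lemma eq_zero_of_forall_abs_nat_mul_lt {x C : ℝ} (h : ∀ j : ℕ, |j * x| < C) : x = 0 := by
  by_contra hx
  obtain ⟨j, hj⟩ := exists_nat_gt (C / |x|)
  have := h j
  rw [abs_mul, Nat.abs_cast, ← lt_div_iff₀ (abs_pos.2 hx)] at this
  linarith

/-- The lower mechanical word of slope `α` and intercept `0`. -/
noncomputable def mechanicalWord (α : ℝ) (n : ℕ) : Bool :=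
  decide (⌊(n : ℝ) * α⌋ < ⌊((n : ℝ) + 1) * α⌋)

section Mechanical

variable {α : ℝ}

lemma mechanicalWord_toNat (h0 : 0 ≤ α) (h1 : α < 1) (n : ℕ) :
    ((mechanicalWord α n).toNat : ℤ) = ⌊((n : ℝ) + 1) * α⌋ - ⌊(n : ℝ) * α⌋ := by
  have hle : ⌊(n : ℝ) * α⌋ ≤ ⌊((n : ℝ) + 1) * α⌋ := Int.floor_le_floor (by nlinarith)
  have hlt : ⌊((n : ℝ) + 1) * α⌋ ≤ ⌊(n : ℝ) * α⌋ + 1 := by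
    rw [← Int.floor_add_one]
    exact Int.floor_le_floor (by nlinarith)
  unfold mechanicalWord
  by_cases h : ⌊(n : ℝ) * α⌋ < ⌊((n : ℝ) + 1) * α⌋ <;> simp [h] <;> omega

lemma count_true_of_factorAt_mechanicalWord (h0 : 0 ≤ α) (h1 : α < 1) {u : List Bool} {p : ℕ}
    (hfac : FactorAt (mechanicalWord α) u p) :
    (u.count true : ℤ) = ⌊((p : ℝ) + u.length) * α⌋ - ⌊(p : ℝ) * α⌋ := by
  induction u generalizing p with
  | nil => simp
  | cons x u ih =>
    obtain ⟨hx, htail⟩ := factorAt_cons_iff.1 hfac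
    have hstep := mechanicalWord_toNat h0 h1 p
    have hrest := ih htail
    rw [← hx] at hstep
    rw [List.count_cons, List.length_cons]
    push_cast at hrest ⊢
    rw [show (p : ℝ) + (u.length + 1) = p + 1 + u.length by ring]
    cases x <;> simp at hstep ⊢ <;> omega

theorem isBalanced_mechanicalWord (h0 : 0 ≤ α) (h1 : α < 1) :
    IsBalanced (mechanicalWord α) := by
  have htrue : ∀ u v : List Bool, Factor (mechanicalWord α) u → Factor (mechanicalWord α) v →
      u.length = v.length → |(u.count true : ℤ) - (v.count true : ℤ)| ≤ 1 := by
    rintro u v ⟨p, hp⟩ ⟨q, hq⟩ hlen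
    have hu := abs_floor_sub_floor_sub_lt ((p + u.length) * α) (p * α)
    have hv := abs_floor_sub_floor_sub_lt ((q + v.length) * α) (q * α)
    rw [← count_true_of_factorAt_mechanicalWord h0 h1 hp] at hu
    rw [← count_true_of_factorAt_mechanicalWord h0 h1 hq, ← hlen] at hv
    have : |((u.count true - v.count true : ℤ) : ℝ)| < 2 := by
      rw [abs_lt] at hu hv ⊢
      push_cast at hu hv ⊢
      constructor <;> nlinarith
    rw [← Int.cast_abs] at this
    have : |(u.count true : ℤ) - (v.count true : ℤ)| < 2 := by exact_mod_cast this
    omega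
  rintro (_ | _) u v hu hv hlen
  · have := htrue u v hu hv hlen
    have hu' := List.count_false_add_count_true u
    have hv' := List.count_false_add_count_true v
    rw [abs_le] at this ⊢
    omega
  · exact htrue u v hu hv hlen

theorem not_ultPeriodic_mechanicalWord (h0 : 0 ≤ α) (h1 : α < 1) (hα : Irrational α) :
    ¬ UltPeriodic (mechanicalWord α) := by
  rintro ⟨p, N, hp, hper⟩
  set F : ℕ → ℤ := fun n => ⌊(n : ℝ) * α⌋ with hF
  have hstep : ∀ n, ((mechanicalWord α n).toNat : ℤ) = F (n + 1) - F n := fun n => by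
    simpa [hF] using mechanicalWord_toNat h0 h1 n
  have hshift : ∀ n ≥ N, F (n + p) - F n = F (N + p) - F N := by
    intro n hn
    induction n, hn using Nat.le_induction with
    | base => rfl
    | succ n hn ih =>
      have := congrArg (fun b : Bool => (b.toNat : ℤ)) (hper n hn)
      simp only [hstep] at this
      rw [Nat.add_right_comm n 1 p]
      omega
  set G := F (N + p) - F N
  -- `⌊(N + j p) α⌋ - ⌊N α⌋ = j G` for all `j` forces `p α = G`.
  have hjumps : ∀ j : ℕ, F (N + j * p) - F N = j * G := by
    intro j
    induction j with
    | zero => simp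
    | succ j ih =>
      have := hshift (N + j * p) (by omega)
      rw [Nat.add_assoc, ← Nat.succ_mul] at this
      push_cast
      linarith
  have hGp : (G : ℝ) - p * α = 0 := by
    refine eq_zero_of_forall_abs_nat_mul_lt (C := 1) fun j => ?_
    have := abs_floor_sub_floor_sub_lt (((N + j * p : ℕ) : ℝ) * α) ((N : ℕ) * α)
    rw [show ⌊((N + j * p : ℕ) : ℝ) * α⌋ - ⌊((N : ℕ) : ℝ) * α⌋ = j * G from hjumps j] at this
    push_cast at this
    convert this using 2
    ring
  exact (hα.natCast_mul hp.ne').ne_int G (by linarith)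

lemma mechanicalWord_eq_false (h0 : 0 ≤ α) {n : ℕ} (h : ((n : ℝ) + 1) * α < 1) :
    mechanicalWord α n = false := by
  have hn : ⌊(n : ℝ) * α⌋ = 0 := Int.floor_eq_zero_iff.2 ⟨by positivity, by nlinarith⟩
  have hn1 : ⌊((n : ℝ) + 1) * α⌋ = 0 := Int.floor_eq_zero_iff.2 ⟨by positivity, h⟩
  simp [mechanicalWord, hn, hn1]

theorem sturmian_mechanicalWord (h0 : 0 ≤ α) (h1 : α < 1) (hα : Irrational α) :
    Sturmian (mechanicalWord α) :=
  ⟨isBalanced_mechanicalWord h0 h1, not_ultPeriodic_mechanicalWord h0 h1 hα⟩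

end Mechanical

open Filter Topology in
lemma tendsto_mechanicalWord_of_tendsto_zero {ι : Type*} {l : Filter ι} {α : ι → ℝ}
    (h0 : ∀ i, 0 ≤ α i) (hα : Tendsto α l (𝓝 0)) :
    Tendsto (fun i => mechanicalWord (α i)) l (𝓝 fun _ => false) := by
  refine tendsto_pi_nhds.2 fun n => ?_
  rw [nhds_discrete, tendsto_pure]
  have : Tendsto (fun i => ((n : ℝ) + 1) * α i) l (𝓝 0) := by
    simpa using hα.const_mul ((n : ℝ) + 1)
  filter_upwards [this.eventually (gt_mem_nhds one_pos)] with i hi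
  exact mechanicalWord_eq_false (h0 i) hi

open Filter in
theorem not_isClosed_setOf_sturmian : ¬ IsClosed {w : ℕ → Bool | Sturmian w} := by
  intro hclosed
  set α : ℕ → ℝ := fun k => √2 / ((k + 2 : ℕ) : ℝ)
  have hα0 : ∀ k, 0 ≤ α k := fun k => by positivity
  have hα1 : ∀ k, α k < 1 := fun k => by
    have : √2 < 2 := by rw [Real.sqrt_lt' two_pos]; norm_num
    rw [div_lt_one (by positivity)]
    push_cast
    linarith [(k.cast_nonneg : (0 : ℝ) ≤ k)]
  have hlim : Tendsto α atTop (nhds 0) :=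
    (tendsto_const_div_atTop_nhds_zero_nat √2).comp (tendsto_add_atTop_nat 2)
  have hconst := hclosed.mem_of_tendsto (tendsto_mechanicalWord_of_tendsto_zero hα0 hlim)
    (Eventually.of_forall fun k =>
      sturmian_mechanicalWord (hα0 k) (hα1 k) (irrational_sqrt_two.div_natCast (by omega)))
  exact hconst.2 ⟨1, 0, one_pos, fun _ _ => rfl⟩

/-- no finite set of substitutions has the set of Sturmian words as
its stable set. -/
theorem stmt14 :
    ¬ ∃ S : Set (Bool → List Bool), S.Finite ∧ (∀ f ∈ S, ∀ a, f a ≠ []) ∧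
      ∀ w : ℕ → Bool, InStable S w ↔ Sturmian w := by
  rintro ⟨S, hS, -, hstable⟩
  have hset : {w | InStable S w} = {w | Sturmian w} := Set.ext hstable
  exact not_isClosed_setOf_sturmian (hset ▸ isClosed_setOf_inStable hS)
end
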